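/- arXiv:1904.09800 — 3 statements merged into one kernel-verified Lean document; each statement's English description precedes it below -/
import Mathlib

section
/- Let G be a weighted graph partitioned into components G_1, ..., G_k (each of size at least 2) by deleting a set of edges. If for every i the Fiedler value (second smallest Laplacian eigenvalue) of G_i is at least τ > 0, then for every i the sum of the two smallest internal costs (weighted degrees within G_i) satisfies I^1_i + I^2_i ≥ τ. -/
open Matrix

/-- The sorted (nondecreasing) list of eigenvalues of a Hermitian real matrix,
counted with multiplicity. -/
noncomputable def eigList {m : Type*} [Fintype m] [DecidableEq m]
    {A : Matrix m m ℝ} (hA : A.IsHermitian) : List ℝ :=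
  (Finset.univ.val.map hA.eigenvalues).sort (· ≤ ·)

/-- The `k`-th smallest eigenvalue (0-indexed) of a Hermitian real matrix. -/
noncomputable def eigNth {m : Type*} [Fintype m] [DecidableEq m]
    {A : Matrix m m ℝ} (hA : A.IsHermitian) (k : ℕ) : ℝ :=
  (eigList hA).getD k 0

/-- The Laplacian matrix of the weighted graph with weight matrix `W`. -/
noncomputable def lap {m : Type*} [Fintype m] [DecidableEq m]
    (W : Matrix m m ℝ) : Matrix m m ℝ :=
  fun i j => if i = j then ∑ k, W i k else -W i j

/-- The weight matrix of the subgraph induced on the part `{v | c v = i}`. -/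
noncomputable def partW {n k : ℕ} (W : Matrix (Fin n) (Fin n) ℝ) (c : Fin n → Fin k)
    (i : Fin k) : Matrix {v : Fin n // c v = i} {v : Fin n // c v = i} ℝ :=
  fun v u => W v.1 u.1

section Aux
open RealInnerProductSpace

private lemma sorted_countP_le_one' {l : List ℝ} (hl : l.Pairwise (· ≤ ·)) {t : ℝ}
    (h : t < l.getD 1 0) : l.countP (fun x => decide (x ≤ t)) ≤ 1 := by
  match l, hl with
  | [], _ => simp
  | [x], _ => exact le_trans List.countP_le_length (by simp)
  | x :: y :: tl, hl =>
    have hy : t < y := by simpa using h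
    have htl : (y :: tl).Pairwise (· ≤ ·) := hl.tail
    have h0 : (y :: tl).countP (fun z => decide (z ≤ t)) = 0 := by
      rw [List.countP_eq_zero]
      intro z hz
      have hyz : y ≤ z := by
        rcases List.mem_cons.mp hz with rfl | hz
        · exact le_refl _
        · exact (List.pairwise_cons.mp htl).1 z hz
      simp only [decide_eq_true_eq]
      exact not_le.mpr (lt_of_lt_of_le hy hyz)
    rw [List.countP_cons, h0]
    split <;> simp

private lemma euclid_inner_eq' {m : Type*} [Fintype m] (x y : EuclideanSpace ℝ m) :
    ⟪x, y⟫ = ∑ w, x w * y w := by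
  simp [PiLp.inner_apply, RCLike.inner_apply, conj_trivial]
  exact Finset.sum_congr rfl fun _ _ => mul_comm _ _

end Aux

open RealInnerProductSpace
set_option maxHeartbeats 1000000

/-- if a connected weighted graph on `n ≥ 4` vertices is partitioned into
components `G_1, …, G_k` (each of size at least 2, given by the coloring `c`) and each
component has Fiedler value at least `τ > 0`, then for each component the sum of the two
smallest internal costs is at least `τ` (equivalently: for every pair of distinct
vertices of a component, the sum of their internal costs is at least `τ`). -/
theorem two_smallest_internal_costs_of_stable_components
    {n k : ℕ} (hn : 4 ≤ n) (W : Matrix (Fin n) (Fin n) ℝ)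
    (hsym : ∀ i j, W i j = W j i) (hnonneg : ∀ i j, 0 ≤ W i j)
    (hdiag : ∀ i, W i i = 0)
    (hconn : (SimpleGraph.fromRel fun i j => 0 < W i j).Connected)
    (c : Fin n → Fin k)
    (hsize : ∀ i : Fin k, 2 ≤ (Finset.univ.filter fun v => c v = i).card)
    (τ : ℝ) (hτ : 0 < τ)
    (hH : ∀ i : Fin k, (lap (partW W c i)).IsHermitian)
    (hfiedler : ∀ i : Fin k, τ ≤ eigNth (hH i) 1) :
    ∀ i : Fin k, ∀ v u : Fin n, c v = i → c u = i → v ≠ u →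
      τ ≤ (∑ x ∈ Finset.univ.filter fun x => c x = i, W v x) +
          (∑ x ∈ Finset.univ.filter fun x => c x = i, W u x) := by
  intro i v u hcv hcu hvu
  classical
  set A := lap (partW W c i) with hAdef
  set μ := (hH i).eigenvalues with hμdef
  set e := (hH i).eigenvectorBasis with hedef
  have hμe : ∀ j, A *ᵥ (e j : {x : Fin n // c x = i} → ℝ) = fun w => μ j * e j w := by
    intro j
    have h := (hH i).mulVec_eigenvectorBasis j
    funext w
    have h2 := congrFun h w
    simpa [hμdef, hedef, hAdef] using h2
  set dv := ∑ x ∈ Finset.univ.filter fun x => c x = i, W v x with hdv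
  set du := ∑ x ∈ Finset.univ.filter fun x => c x = i, W u x with hdu
  set t := dv + du with ht
  have hsub : ∀ f : Fin n → ℝ, (∑ x ∈ Finset.univ.filter fun x => c x = i, f x)
      = ∑ w : {x : Fin n // c x = i}, f w.1 := fun f =>
    Finset.sum_subtype _ (by simp) f
  set p : {x : Fin n // c x = i} := ⟨v, hcv⟩ with hp
  set q : {x : Fin n // c x = i} := ⟨u, hcu⟩ with hq
  have hpq : p ≠ q := by
    simp only [hp, hq, ne_eq, Subtype.mk.injEq]
    exact hvu
  have key : eigNth (hH i) 1 ≤ t := by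
    by_contra hlt
    push_neg at hlt
    rw [eigNth] at hlt
    set S : Finset {x : Fin n // c x = i} := Finset.univ.filter (fun j => μ j ≤ t) with hS
    have hScard : S.card ≤ 1 := by
      have hsorted : (eigList (hH i)).Pairwise (· ≤ ·) := Multiset.pairwise_sort ..
      have hcount := sorted_countP_le_one' hsorted hlt
      have hcard : S.card = (eigList (hH i)).countP (fun x => decide (x ≤ t)) := by
        rw [eigList, ← Multiset.coe_countP, Multiset.sort_eq, Multiset.countP_map]
        rfl
      omega
    obtain ⟨a, b, hab, haborth⟩ : ∃ a b : ℝ, ¬(a = 0 ∧ b = 0) ∧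
        ∀ j ∈ S, a * e j p + b * e j q = 0 := by
      rcases S.eq_empty_or_nonempty with h | ⟨j0, hj0⟩
      · exact ⟨1, 0, by norm_num, by simp [h]⟩
      · by_cases h0 : e j0 p = 0 ∧ e j0 q = 0
        · refine ⟨1, 0, by norm_num, fun j hj => ?_⟩
          have hj0' : j = j0 := Finset.card_le_one.mp hScard j hj j0 hj0
          simp [hj0', h0.1]
        · refine ⟨e j0 q, -(e j0 p), ?_, fun j hj => ?_⟩
          · rintro ⟨h1, h2⟩
            exact h0 ⟨by linarith [neg_eq_zero.mp h2], h1⟩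
          · have hj0' : j = j0 := Finset.card_le_one.mp hScard j hj j0 hj0
            subst hj0'; ring
    set x : EuclideanSpace ℝ {x : Fin n // c x = i} :=
      WithLp.toLp 2 (fun w => a * (if w = p then 1 else 0) + b * (if w = q then 1 else 0)) with hx
    have hxw : ∀ w, x w = a * (if w = p then 1 else 0) + b * (if w = q then 1 else 0) :=
      fun w => rfl
    have hsum : ∀ g : {x : Fin n // c x = i} → ℝ, (∑ w, g w * x w) = a * g p + b * g q := by
      intro g
      simp only [hxw, mul_add, mul_ite, mul_one, mul_zero, Finset.sum_add_distrib,
        Finset.sum_ite_eq', Finset.mem_univ, if_true]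
      ring
    have hxp : x p = a := by simp [hxw, hpq]
    have hxq : x q = b := by simp [hxw, Ne.symm hpq]
    have hsymA : ∀ w z : {x : Fin n // c x = i}, A w z = A z w := by
      intro w z
      by_cases h : w = z
      · subst h; rfl
      · simp [hAdef, lap, partW, h, Ne.symm h, hsym w.1 z.1]
    have hswap : ∀ y z : {x : Fin n // c x = i} → ℝ,
        (∑ w, y w * (A *ᵥ z) w) = ∑ w, (A *ᵥ y) w * z w := by
      intro y z
      simp only [mulVec, dotProduct, Finset.mul_sum, Finset.sum_mul]
      rw [Finset.sum_comm]
      refine Finset.sum_congr rfl fun w _ => Finset.sum_congr rfl fun z' _ => ?_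
      rw [hsymA w z']
      ring
    set cf : {x : Fin n // c x = i} → ℝ := fun j => ⟪e j, x⟫ with hcf
    have hcfj : ∀ j, ⟪e j, x⟫ = cf j := fun j => rfl
    have hAej : ∀ j, ⟪e j, (WithLp.toLp 2 (A *ᵥ x) : EuclideanSpace ℝ {x : Fin n // c x = i})⟫ = μ j * cf j := by
      intro j
      rw [euclid_inner_eq', hswap (e j) x, hμe j]
      simp only [mul_assoc, ← Finset.mul_sum]
      congr 1
      exact (euclid_inner_eq' _ _).symm
    have hQspec : ⟪x, (WithLp.toLp 2 (A *ᵥ x) : EuclideanSpace ℝ {x : Fin n // c x = i})⟫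
        = ∑ j, μ j * (cf j) ^ 2 := by
      rw [← e.sum_inner_mul_inner x (WithLp.toLp 2 (A *ᵥ x) : EuclideanSpace ℝ {x : Fin n // c x = i})]
      refine Finset.sum_congr rfl fun j _ => ?_
      rw [hAej j, real_inner_comm (e j) x, hcfj j]
      ring
    have hxxeq : ⟪x, x⟫ = ∑ j, (cf j) ^ 2 := by
      rw [← e.sum_inner_mul_inner x x]
      refine Finset.sum_congr rfl fun j _ => ?_
      rw [real_inner_comm (e j) x, hcfj j]
      ring
    have hxx2 : ⟪x, x⟫ = a ^ 2 + b ^ 2 := by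
      rw [euclid_inner_eq', hsum x, hxp, hxq]; ring
    have hpos : 0 < a ^ 2 + b ^ 2 := by
      rcases not_and_or.mp hab with h | h
      · have h2 : 0 < a ^ 2 := by positivity
        nlinarith [sq_nonneg b]
      · have h2 : 0 < b ^ 2 := by positivity
        nlinarith [sq_nonneg a]
    have hzero : ∀ j ∈ S, cf j = 0 := by
      intro j hj
      have : cf j = ∑ w, e j w * x w := euclid_inner_eq' _ _
      rw [this, hsum (fun w => e j w)]
      exact haborth j hj
    have hμgt : ∀ j, j ∉ S → t < μ j := by
      intro j hj
      simp only [hS, Finset.mem_filter, Finset.mem_univ, true_and] at hj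
      exact lt_of_not_ge hj
    have hex : ∃ j, cf j ≠ 0 := by
      by_contra hall
      push_neg at hall
      rw [hxx2] at hxxeq
      simp only [hall] at hxxeq
      simp at hxxeq
      linarith
    obtain ⟨j0, hj0⟩ := hex
    have hj0S : j0 ∉ S := fun h => hj0 (hzero j0 h)
    have hQgt : t * (a ^ 2 + b ^ 2) < ⟪x, (WithLp.toLp 2 (A *ᵥ x) : EuclideanSpace ℝ {x : Fin n // c x = i})⟫ := by
      rw [hQspec]
      have hrw : t * (a ^ 2 + b ^ 2) = ∑ j, t * (cf j) ^ 2 := by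
        rw [← Finset.mul_sum, ← hxxeq, hxx2]
      rw [hrw]
      refine Finset.sum_lt_sum (fun j _ => ?_) ⟨j0, Finset.mem_univ _, ?_⟩
      · by_cases hjS : j ∈ S
        · rw [hzero j hjS]; simp
        · nlinarith [sq_nonneg (cf j), (hμgt j hjS).le]
      · have h1 := hμgt j0 hj0S
        have h2 : 0 < (cf j0) ^ 2 := by positivity
        nlinarith
    have hApp : A p p = dv := by
      rw [hdv, hsub (fun z => W v z)]
      simp [hAdef, lap, partW, hp]
    have hAqq : A q q = du := by
      rw [hdu, hsub (fun z => W u z)]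
      simp [hAdef, lap, partW, hq]
    have hApq : A p q = -W v u := by
      simp [hAdef, lap, partW, hpq, hp, hq, hvu]
    have hAqp : A q p = -W u v := by
      simp [hAdef, lap, partW, Ne.symm hpq, hp, hq, Ne.symm hvu]
    have hQdir : ⟪x, (WithLp.toLp 2 (A *ᵥ x) : EuclideanSpace ℝ {x : Fin n // c x = i})⟫
        = a ^ 2 * dv + b ^ 2 * du - 2 * a * b * W v u := by
      rw [euclid_inner_eq']
      have hAx : ∀ w, (A *ᵥ (x : {x : Fin n // c x = i} → ℝ)) w = a * A w p + b * A w q := by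
        intro w
        simp only [mulVec, dotProduct, hxw, mul_add, mul_ite, mul_one, mul_zero,
          Finset.sum_add_distrib, Finset.sum_ite_eq', Finset.mem_univ, if_true]
        ring
      calc (∑ w, x w * (A *ᵥ (x : {x : Fin n // c x = i} → ℝ)) w)
          = ∑ w, (fun w => a * A w p + b * A w q) w * x w := by
            refine Finset.sum_congr rfl fun w _ => ?_
            rw [hAx w]; ring
        _ = a * (a * A p p + b * A p q) + b * (a * A q p + b * A q q) := hsum _
        _ = a ^ 2 * dv + b ^ 2 * du - 2 * a * b * W v u := by
            rw [hApp, hApq, hAqp, hAqq, hsym u v]; ring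
    have hWvu_le_du : W v u ≤ du := by
      rw [hsym v u, hdu]
      exact Finset.single_le_sum (fun z _ => hnonneg u z) (by simp [hcv])
    have hWvu_le_dv : W v u ≤ dv := by
      rw [hdv]
      exact Finset.single_le_sum (fun z _ => hnonneg v z) (by simp [hcu])
    have hQle : ⟪x, (WithLp.toLp 2 (A *ᵥ x) : EuclideanSpace ℝ {x : Fin n // c x = i})⟫ ≤ t * (a ^ 2 + b ^ 2) := by
      rw [hQdir, ht]
      nlinarith [mul_nonneg (sq_nonneg a) (sub_nonneg.mpr hWvu_le_du),
        mul_nonneg (sq_nonneg b) (sub_nonneg.mpr hWvu_le_dv),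
        mul_nonneg (sq_nonneg (a + b)) (hnonneg v u)]
    linarith
  linarith [hfiedler i]
end

section
/- Let G be a weighted graph with Fiedler value λ_2(G) and let G_i be one component of a partition of G obtained by deleting cut edges. If the largest external cost E*_i of any vertex of G_i satisfies E*_i ≤ λ_2(G) − τ, then the Fiedler value of G_i is at least τ. -/
open Matrix

/-- The weight matrix of the subgraph induced on the vertex set `S`. -/
noncomputable def subW {n : ℕ} (W : Matrix (Fin n) (Fin n) ℝ) (S : Finset (Fin n)) :
    Matrix {v : Fin n // v ∈ S} {v : Fin n // v ∈ S} ℝ :=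
  fun v u => W v.1 u.1



section helpers
variable {m : Type*} [Fintype m] [DecidableEq m]

lemma dot_eigB {A : Matrix m m ℝ} (hA : A.IsHermitian) (j k : m) :
    (hA.eigenvectorBasis j : m → ℝ) ⬝ᵥ (hA.eigenvectorBasis k : m → ℝ)
      = if j = k then 1 else 0 := by
  have h := hA.eigenvectorBasis.orthonormal
  rw [orthonormal_iff_ite] at h
  have := h j k
  rw [PiLp.inner_apply] at this
  simpa [dotProduct, RCLike.inner_apply, mul_comm] using this

lemma dot_sum_sum (u : m → (m → ℝ)) (hu : ∀ j k, u j ⬝ᵥ u k = if j = k then 1 else 0)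
    (c d : m → ℝ) :
    (∑ j, c j • u j) ⬝ᵥ (∑ k, d k • u k) = ∑ k, c k * d k := by
  have key : ∀ j k : m, ∑ i, (c j * u j i) * (d k * u k i)
      = if j = k then c j * d k else 0 := by
    intro j k
    have h := hu j k
    simp only [dotProduct] at h
    have : ∑ i, (c j * u j i) * (d k * u k i) = c j * d k * ∑ i, u j i * u k i := by
      rw [Finset.mul_sum]; exact Finset.sum_congr rfl fun i _ => by ring
    rw [this, h]
    split <;> simp
  simp only [dotProduct, Finset.sum_apply, Pi.smul_apply, smul_eq_mul]
  calc ∑ i, (∑ j, c j * u j i) * (∑ k, d k * u k i)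
      = ∑ i, ∑ j, ∑ k, (c j * u j i) * (d k * u k i) := by
        exact Finset.sum_congr rfl fun i _ => by rw [Finset.sum_mul_sum]
    _ = ∑ j, ∑ i, ∑ k, (c j * u j i) * (d k * u k i) := Finset.sum_comm
    _ = ∑ j, ∑ k, ∑ i, (c j * u j i) * (d k * u k i) :=
        Finset.sum_congr rfl fun j _ => Finset.sum_comm
    _ = ∑ j, ∑ k, if j = k then c j * d k else 0 :=
        Finset.sum_congr rfl fun j _ => Finset.sum_congr rfl fun k _ => key j k
    _ = ∑ k, c k * d k := by simp

lemma repr_sum {A : Matrix m m ℝ} (hA : A.IsHermitian) (x : m → ℝ) :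
    x = ∑ k, ((hA.eigenvectorBasis k : m → ℝ) ⬝ᵥ x) • (hA.eigenvectorBasis k : m → ℝ) := by
  have h := hA.eigenvectorBasis.sum_repr (WithLp.toLp 2 x)
  have h2 : ∀ k, hA.eigenvectorBasis.repr (WithLp.toLp 2 x) k
      = (hA.eigenvectorBasis k : m → ℝ) ⬝ᵥ x := by
    intro k
    rw [hA.eigenvectorBasis.repr_apply_apply, PiLp.inner_apply]
    simp [dotProduct, RCLike.inner_apply, mul_comm]
  simp_rw [← h2]
  have h3 := congrArg WithLp.ofLp h
  simpa using h3.symm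

/-- spectral expansion of the quadratic form -/
lemma quad_spectral {A : Matrix m m ℝ} (hA : A.IsHermitian) (x : m → ℝ) :
    x ⬝ᵥ (A *ᵥ x) = ∑ k, hA.eigenvalues k * ((hA.eigenvectorBasis k : m → ℝ) ⬝ᵥ x)^2 := by
  set c : m → ℝ := fun k => (hA.eigenvectorBasis k : m → ℝ) ⬝ᵥ x with hc
  have hx : x = ∑ k, c k • (hA.eigenvectorBasis k : m → ℝ) := repr_sum hA x
  have hAx : A *ᵥ x = ∑ k, (hA.eigenvalues k * c k) • (hA.eigenvectorBasis k : m → ℝ) := by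
    have : A *ᵥ x = Matrix.mulVecLin A x := rfl
    rw [this, hx, map_sum]
    exact Finset.sum_congr rfl fun k _ => by
      have h3 : A *ᵥ (hA.eigenvectorBasis k : m → ℝ)
          = hA.eigenvalues k • (hA.eigenvectorBasis k : m → ℝ) := hA.mulVec_eigenvectorBasis k
      rw [_root_.map_smul, Matrix.mulVecLin_apply, h3, smul_smul, mul_comm]
  rw [hAx]
  conv_lhs => rw [hx]
  rw [dot_sum_sum _ (dot_eigB hA)]
  exact Finset.sum_congr rfl fun k _ => by ring

lemma normsq_spectral {A : Matrix m m ℝ} (hA : A.IsHermitian) (x : m → ℝ) :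
    ∑ i, (x i)^2 = ∑ k, ((hA.eigenvectorBasis k : m → ℝ) ⬝ᵥ x)^2 := by
  set c : m → ℝ := fun k => (hA.eigenvectorBasis k : m → ℝ) ⬝ᵥ x with hc
  have hx : x = ∑ k, c k • (hA.eigenvectorBasis k : m → ℝ) := repr_sum hA x
  have : x ⬝ᵥ x = ∑ k, c k * c k := by
    conv_lhs => rw [hx]
    exact dot_sum_sum _ (dot_eigB hA) c c
  simpa [dotProduct, pow_two, c] using this
end helpers

section eig
variable {m : Type*} [Fintype m] [DecidableEq m] {A : Matrix m m ℝ} (hA : A.IsHermitian)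

lemma eigList_coe : (eigList hA : Multiset ℝ) = Finset.univ.val.map hA.eigenvalues :=
  Multiset.sort_eq _ _

lemma eigList_length : (eigList hA).length = Fintype.card m := by
  rw [eigList, Multiset.length_sort, Multiset.card_map]
  rfl

lemma eigList_sorted : (eigList hA).Pairwise (· ≤ ·) := Multiset.pairwise_sort _ _

lemma eigList_two (h2 : 2 ≤ Fintype.card m) :
    ∃ a t, eigList hA = a :: eigNth hA 1 :: t := by
  have hlen : 2 ≤ (eigList hA).length := by rw [eigList_length]; exact h2
  match hl : eigList hA, hlen with
  | a :: b :: t, _ => exact ⟨a, t, by rw [eigNth, hl]; rfl⟩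

/-- there is at most one eigenvalue (with multiplicity) below `eigNth hA 1` -/
lemma at_most_one_lt (h2 : 2 ≤ Fintype.card m) {k k' : m} (hkk : k ≠ k')
    (h1 : hA.eigenvalues k < eigNth hA 1) (h1' : hA.eigenvalues k' < eigNth hA 1) : False := by
  obtain ⟨a, t, hl⟩ := eigList_two hA h2
  set b := eigNth hA 1
  set p : ℝ → Prop := fun z => z < b with hp
  have hsorted := eigList_sorted hA
  rw [hl] at hsorted
  have hbt : ∀ z ∈ t, b ≤ z := (List.pairwise_cons.1 (List.pairwise_cons.1 hsorted).2).1
  -- upper bound on countP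
  have hub : Multiset.countP p (eigList hA : Multiset ℝ) ≤ 1 := by
    rw [hl]
    have : ((a :: b :: t : List ℝ) : Multiset ℝ) = a ::ₘ b ::ₘ (t : Multiset ℝ) := rfl
    rw [this, Multiset.countP_cons, Multiset.countP_cons]
    have h0 : Multiset.countP p (t : Multiset ℝ) = 0 :=
      Multiset.countP_eq_zero.2 fun z hz => not_lt.2 (hbt z (by exact_mod_cast hz))
    have hb : ¬ p b := lt_irrefl b
    rw [h0, if_neg hb]
    split <;> omega
  -- lower bound
  have hmemk' : k' ∈ Finset.univ.val.erase k :=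
    Multiset.Nodup.mem_erase_iff (Finset.univ.nodup) |>.2 ⟨hkk.symm, Finset.mem_univ_val _⟩
  have e1 : (Finset.univ.val : Multiset m) = k ::ₘ Finset.univ.val.erase k :=
    (Multiset.cons_erase (Finset.mem_univ_val k)).symm
  have e2 : Finset.univ.val.erase k = k' ::ₘ (Finset.univ.val.erase k).erase k' :=
    (Multiset.cons_erase hmemk').symm
  have hlb : 2 ≤ Multiset.countP p (eigList hA : Multiset ℝ) := by
    rw [eigList_coe, e1, e2, Multiset.map_cons, Multiset.map_cons,
      Multiset.countP_cons, Multiset.countP_cons, if_pos h1, if_pos h1']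
    omega
  omega

lemma two_smallest (h2 : 2 ≤ Fintype.card m) :
    ∃ i j : m, i ≠ j ∧ hA.eigenvalues i ≤ eigNth hA 1 ∧
      hA.eigenvalues j = eigNth hA 1 := by
  obtain ⟨a, t, hl⟩ := eigList_two hA h2
  set b := eigNth hA 1
  have hsorted := eigList_sorted hA
  rw [hl] at hsorted
  have hab : a ≤ b := (List.pairwise_cons.1 hsorted).1 b (by simp)
  have hcoe : (a ::ₘ b ::ₘ (t : Multiset ℝ)) = Finset.univ.val.map hA.eigenvalues := by
    rw [← eigList_coe hA, hl]; rfl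
  have ha : a ∈ Finset.univ.val.map hA.eigenvalues := by
    rw [← hcoe]; simp
  obtain ⟨i, _, hi⟩ := Multiset.mem_map.1 ha
  have e1 : (Finset.univ.val : Multiset m) = i ::ₘ Finset.univ.val.erase i :=
    (Multiset.cons_erase (Finset.mem_univ_val i)).symm
  have htail : (b ::ₘ (t : Multiset ℝ)) = (Finset.univ.val.erase i).map hA.eigenvalues := by
    have hmap : Finset.univ.val.map hA.eigenvalues
        = a ::ₘ (Finset.univ.val.erase i).map hA.eigenvalues := by
      conv_lhs => rw [e1]
      rw [Multiset.map_cons, hi]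
    have : (a ::ₘ b ::ₘ (t : Multiset ℝ))
        = a ::ₘ (Finset.univ.val.erase i).map hA.eigenvalues := by
      rw [hcoe, hmap]
    exact (Multiset.cons_inj_right a).1 this
  have hb : b ∈ (Finset.univ.val.erase i).map hA.eigenvalues := by
    rw [← htail]; simp
  obtain ⟨j, hj, hjb⟩ := Multiset.mem_map.1 hb
  have hji : j ≠ i :=
    (Multiset.Nodup.mem_erase_iff (Finset.univ.nodup) |>.1 hj).1
  exact ⟨i, j, hji.symm, le_of_eq_of_le hi hab, hjb⟩
end eig

section lapsec
variable {m : Type*} [Fintype m] [DecidableEq m] (W : Matrix m m ℝ)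

lemma lap_mulVec (hdiag : ∀ i, W i i = 0) (x : m → ℝ) (i : m) :
    (lap W *ᵥ x) i = (∑ k, W i k) * x i - ∑ j, W i j * x j := by
  simp only [mulVec, dotProduct, lap]
  have : ∀ j : m, (if i = j then ∑ k, W i k else -W i j) * x j
      = (if j = i then (∑ k, W i k) * x i else 0) - W i j * x j := by
    intro j
    by_cases h : i = j
    · subst h; simp [hdiag i]
    · simp [h, Ne.symm h]
  rw [Finset.sum_congr rfl fun j _ => this j, Finset.sum_sub_distrib]
  simp

lemma quad_expand (hdiag : ∀ i, W i i = 0) (x : m → ℝ) :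
    x ⬝ᵥ (lap W *ᵥ x) = ∑ i, ((∑ j, W i j) * (x i)^2) - ∑ i, ∑ j, W i j * (x i * x j) := by
  simp only [dotProduct, lap_mulVec W hdiag]
  rw [← Finset.sum_sub_distrib]
  refine Finset.sum_congr rfl fun i _ => ?_
  rw [mul_sub]
  congr 1
  · ring
  · rw [Finset.mul_sum]
    exact Finset.sum_congr rfl fun j _ => by ring

lemma quad_sym (hsym : ∀ i j, W i j = W j i) (hdiag : ∀ i, W i i = 0) (x : m → ℝ) :
    x ⬝ᵥ (lap W *ᵥ x) = (∑ i, ∑ j, W i j * (x i - x j)^2) / 2 := by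
  rw [quad_expand W hdiag]
  have expand : ∀ i j : m, W i j * (x i - x j)^2
      = W i j * (x i)^2 + W i j * (x j)^2 - 2 * (W i j * (x i * x j)) := by
    intro i j; ring
  have hs : ∑ i, ∑ j, W i j * (x j)^2 = ∑ i, ∑ j, W i j * (x i)^2 := by
    rw [Finset.sum_comm]
    exact Finset.sum_congr rfl fun i _ => Finset.sum_congr rfl fun j _ => by rw [hsym]
  simp_rw [expand, Finset.sum_sub_distrib, Finset.sum_add_distrib]
  rw [hs]
  have h2 : ∀ i : m, ∑ j, 2 * (W i j * (x i * x j)) = 2 * ∑ j, W i j * (x i * x j) :=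
    fun i => (Finset.mul_sum _ _ _).symm
  simp_rw [h2]
  rw [show ∑ i, 2 * (∑ j, W i j * (x i * x j)) = 2 * ∑ i, ∑ j, W i j * (x i * x j) from
    (Finset.mul_sum _ _ _).symm]
  have : ∑ i, (∑ j, W i j) * (x i)^2 = ∑ i, ∑ j, W i j * (x i)^2 :=
    Finset.sum_congr rfl fun i _ => by rw [Finset.sum_mul]
  rw [this]
  ring

lemma lap_mulVec_one (hdiag : ∀ i, W i i = 0) :
    lap W *ᵥ (fun _ => (1:ℝ)) = 0 := by
  funext i
  rw [lap_mulVec W hdiag]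
  simp

end lapsec

section main
variable {m : Type*} [Fintype m] [DecidableEq m]

lemma eigNth_one_ge {M : Matrix m m ℝ} (hM : M.IsHermitian) (h2 : 2 ≤ Fintype.card m)
    (v : m → ℝ) (τ : ℝ)
    (h : ∀ x : m → ℝ, x ⬝ᵥ v = 0 → τ * (∑ i, (x i)^2) ≤ x ⬝ᵥ (M *ᵥ x)) :
    τ ≤ eigNth hM 1 := by
  obtain ⟨i, j, hij, hi, hj⟩ := two_smallest hM h2
  set u : m → ℝ := (hM.eigenvectorBasis i : m → ℝ) with hu
  set w : m → ℝ := (hM.eigenvectorBasis j : m → ℝ) with hw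
  have huu : u ⬝ᵥ u = 1 := by rw [hu, dot_eigB hM i i]; simp
  have hww : w ⬝ᵥ w = 1 := by rw [hw, dot_eigB hM j j]; simp
  have huw : u ⬝ᵥ w = 0 := by rw [hu, hw, dot_eigB hM i j]; simp [hij]
  have hwu : w ⬝ᵥ u = 0 := by rw [hu, hw, dot_eigB hM j i]; simp [hij.symm]
  have hMu : M *ᵥ u = hM.eigenvalues i • u := hM.mulVec_eigenvectorBasis i
  have hMw : M *ᵥ w = hM.eigenvalues j • w := hM.mulVec_eigenvectorBasis j
  have hsumsq : ∀ y : m → ℝ, ∑ a, (y a)^2 = y ⬝ᵥ y := by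
    intro y; simp [dotProduct, pow_two]
  by_cases hp : u ⬝ᵥ v = 0
  · have h1 := h u hp
    rw [hsumsq, huu, hMu, dotProduct_smul, huu] at h1
    simp only [mul_one, smul_eq_mul] at h1
    exact le_trans h1 hi
  · set x : m → ℝ := (w ⬝ᵥ v) • u - (u ⬝ᵥ v) • w with hx
    have hxv : x ⬝ᵥ v = 0 := by
      rw [hx, sub_dotProduct, smul_dotProduct, smul_dotProduct, smul_eq_mul, smul_eq_mul]
      ring
    have hxx : x ⬝ᵥ x = (w ⬝ᵥ v)^2 + (u ⬝ᵥ v)^2 := by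
      simp only [hx, sub_dotProduct, dotProduct_sub, smul_dotProduct, dotProduct_smul,
        smul_eq_mul, huu, hww, huw, hwu]
      ring
    have hMx : x ⬝ᵥ (M *ᵥ x) = hM.eigenvalues i * (w ⬝ᵥ v)^2
        + hM.eigenvalues j * (u ⬝ᵥ v)^2 := by
      have : M *ᵥ x = (w ⬝ᵥ v) • (hM.eigenvalues i • u)
          - (u ⬝ᵥ v) • (hM.eigenvalues j • w) := by
        rw [hx, Matrix.mulVec_sub, Matrix.mulVec_smul, Matrix.mulVec_smul, hMu, hMw]
      rw [this]
      simp only [hx, sub_dotProduct, dotProduct_sub, smul_dotProduct, dotProduct_smul,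
        smul_eq_mul, huu, hww, huw, hwu]
      ring
    have h1 := h x hxv
    rw [hsumsq, hxx, hMx] at h1
    have hpos : 0 < (w ⬝ᵥ v)^2 + (u ⬝ᵥ v)^2 := by positivity
    have hub : hM.eigenvalues i * (w ⬝ᵥ v)^2 + hM.eigenvalues j * (u ⬝ᵥ v)^2
        ≤ eigNth hM 1 * ((w ⬝ᵥ v)^2 + (u ⬝ᵥ v)^2) := by
      rw [mul_add]
      have g1 : hM.eigenvalues i * (w ⬝ᵥ v)^2 ≤ eigNth hM 1 * (w ⬝ᵥ v)^2 :=
        mul_le_mul_of_nonneg_right hi (sq_nonneg _)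
      have g2 : hM.eigenvalues j * (u ⬝ᵥ v)^2 ≤ eigNth hM 1 * (u ⬝ᵥ v)^2 :=
        mul_le_mul_of_nonneg_right hj.le (sq_nonneg _)
      linarith
    have := le_trans h1 hub
    exact le_of_mul_le_mul_right (by linarith [this]) hpos

lemma quad_lower {M : Matrix m m ℝ} (hM : M.IsHermitian) (h2 : 2 ≤ Fintype.card m)
    (hpsd : ∀ y : m → ℝ, 0 ≤ y ⬝ᵥ (M *ᵥ y))
    (hone : M *ᵥ (fun _ => (1:ℝ)) = 0)
    (hker : ∀ y : m → ℝ, M *ᵥ y = 0 → ∀ i j, y i = y j)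
    (x : m → ℝ) (hx : ∑ i, x i = 0) :
    eigNth hM 1 * (∑ i, (x i)^2) ≤ x ⬝ᵥ (M *ᵥ x) := by
  have hne : Nonempty m := by
    rw [← Fintype.card_pos_iff]; omega
  rw [quad_spectral hM x, normsq_spectral hM x, Finset.mul_sum]
  apply Finset.sum_le_sum
  intro k _
  set c : ℝ := (hM.eigenvectorBasis k : m → ℝ) ⬝ᵥ x with hc
  by_cases hk : eigNth hM 1 ≤ hM.eigenvalues k
  · exact mul_le_mul_of_nonneg_right hk (sq_nonneg c)
  push_neg at hk
  -- show c = 0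
  have hMbk : M *ᵥ (hM.eigenvectorBasis k : m → ℝ)
      = hM.eigenvalues k • (hM.eigenvectorBasis k : m → ℝ) := hM.mulVec_eigenvectorBasis k
  have hbkbk : (hM.eigenvectorBasis k : m → ℝ) ⬝ᵥ (hM.eigenvectorBasis k : m → ℝ) = 1 := by
    rw [dot_eigB hM k k]; simp
  have hknonneg : 0 ≤ hM.eigenvalues k := by
    have := hpsd (hM.eigenvectorBasis k : m → ℝ)
    rw [hMbk, dotProduct_smul, hbkbk] at this
    simpa using this
  have hkzero : hM.eigenvalues k = 0 := by
    by_contra hne0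
    have hkpos : 0 < hM.eigenvalues k := lt_of_le_of_ne hknonneg (Ne.symm hne0)
    -- 0 is an eigenvalue
    have hdet : M.det = 0 := by
      rw [← Matrix.exists_mulVec_eq_zero_iff]
      refine ⟨fun _ => (1:ℝ), ?_, hone⟩
      intro hzero
      have := congrFun hzero (Classical.arbitrary m)
      simp at this
    have hprod : ∏ a, hM.eigenvalues a = 0 := by
      have := hM.det_eq_prod_eigenvalues
      rw [hdet] at this
      exact_mod_cast this.symm
    obtain ⟨k0, _, hk0⟩ := Finset.prod_eq_zero_iff.1 hprod
    have hkk0 : k ≠ k0 := fun h => by rw [h, hk0] at hkpos; exact lt_irrefl _ hkpos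
    exact at_most_one_lt hM h2 hkk0 hk (by rw [hk0]; linarith)
  have hker0 : M *ᵥ (hM.eigenvectorBasis k : m → ℝ) = 0 := by
    rw [hMbk, hkzero, zero_smul]
  have hconst := hker _ hker0
  have hc0 : c = 0 := by
    obtain ⟨i0⟩ := hne
    have : ∀ a : m, (hM.eigenvectorBasis k : m → ℝ) a
        = (hM.eigenvectorBasis k : m → ℝ) i0 := fun a => hconst a i0
    rw [hc]
    calc (hM.eigenvectorBasis k : m → ℝ) ⬝ᵥ x
        = ∑ a, (hM.eigenvectorBasis k : m → ℝ) i0 * x a := by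
          simp only [dotProduct]
          exact Finset.sum_congr rfl fun a _ => by rw [this a]
      _ = (hM.eigenvectorBasis k : m → ℝ) i0 * ∑ a, x a := by rw [Finset.mul_sum]
      _ = 0 := by rw [hx, mul_zero]
  rw [hc0]
  simp
end main

section conn
variable {n : ℕ}

lemma lap_psd (W : Matrix (Fin n) (Fin n) ℝ) (hsym : ∀ i j, W i j = W j i)
    (hnonneg : ∀ i j, 0 ≤ W i j) (hdiag : ∀ i, W i i = 0) (y : Fin n → ℝ) :
    0 ≤ y ⬝ᵥ (lap W *ᵥ y) := by
  rw [quad_sym W hsym hdiag]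
  apply div_nonneg _ (by norm_num)
  apply Finset.sum_nonneg
  intro i _
  apply Finset.sum_nonneg
  intro j _
  exact mul_nonneg (hnonneg i j) (sq_nonneg _)

lemma lap_ker_const (W : Matrix (Fin n) (Fin n) ℝ) (hsym : ∀ i j, W i j = W j i)
    (hnonneg : ∀ i j, 0 ≤ W i j) (hdiag : ∀ i, W i i = 0)
    (hconn : (SimpleGraph.fromRel fun i j => 0 < W i j).Connected)
    (y : Fin n → ℝ) (hy : lap W *ᵥ y = 0) : ∀ i j, y i = y j := by
  have hq : y ⬝ᵥ (lap W *ᵥ y) = 0 := by rw [hy]; simp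
  rw [quad_sym W hsym hdiag, div_eq_zero_iff] at hq
  have hq2 : ∑ i, ∑ j, W i j * (y i - y j)^2 = 0 := by
    rcases hq with h | h
    · exact h
    · norm_num at h
  have hterm : ∀ i j : Fin n, W i j * (y i - y j)^2 = 0 := by
    intro i j
    have houter := (Finset.sum_eq_zero_iff_of_nonneg (fun i _ =>
      Finset.sum_nonneg fun j _ => mul_nonneg (hnonneg i j) (sq_nonneg _))).1 hq2 i
      (Finset.mem_univ i)
    exact (Finset.sum_eq_zero_iff_of_nonneg (fun j _ =>
      mul_nonneg (hnonneg i j) (sq_nonneg _))).1 houter j (Finset.mem_univ j)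
  have hedge : ∀ i j : Fin n, 0 < W i j → y i = y j := by
    intro i j hW
    have := hterm i j
    have h2 : (y i - y j)^2 = 0 := by
      rcases mul_eq_zero.1 this with h | h
      · exact absurd h (ne_of_gt hW)
      · exact h
    have := pow_eq_zero_iff (n := 2) (by norm_num) |>.1 h2
    linarith [this]
  intro i j
  obtain ⟨p⟩ := hconn.preconnected i j
  induction p with
  | nil => rfl
  | cons h p ih =>
    rw [SimpleGraph.fromRel_adj] at h
    rcases h.2 with hw | hw
    · exact (hedge _ _ hw).trans ih
    · exact ((hedge _ _ hw).symm.trans ih : _)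
end conn

/-- if `S` is a component (of size ≥ 2) of a partition of a connected
weighted graph `G` on `n ≥ 4` vertices, and every vertex of `S` has external cost at most
`λ₂(G) - τ`, then the Fiedler value of the subgraph induced on `S` is at least `τ`. -/
theorem fiedler_of_component_ge_of_external_cost_le
    {n : ℕ} (hn : 4 ≤ n) (W : Matrix (Fin n) (Fin n) ℝ)
    (hsym : ∀ i j, W i j = W j i) (hnonneg : ∀ i j, 0 ≤ W i j)
    (hdiag : ∀ i, W i i = 0)
    (hconn : (SimpleGraph.fromRel fun i j => 0 < W i j).Connected)
    (hL : (lap W).IsHermitian)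
    (S : Finset (Fin n)) (hScard : 2 ≤ S.card)
    (hS : (lap (subW W S)).IsHermitian)
    (τ : ℝ) (hτ : 0 < τ)
    (hext : ∀ s ∈ S, ∑ t ∈ Sᶜ, W s t ≤ eigNth hL 1 - τ) :
    τ ≤ eigNth hS 1 := by
  have hcardn : 2 ≤ Fintype.card (Fin n) := by simp; omega
  have hcard : 2 ≤ Fintype.card {v : Fin n // v ∈ S} := by
    rw [Fintype.card_coe]; exact hScard
  apply eigNth_one_ge hS hcard (fun _ => (1:ℝ)) τ
  intro y hy
  have hysum : ∑ a : {v : Fin n // v ∈ S}, y a = 0 := by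
    simpa [dotProduct] using hy
  -- extension by zero
  set x : Fin n → ℝ := fun i => if h : i ∈ S then y ⟨i, h⟩ else 0 with hxdef
  have hxS : ∀ a : {v : Fin n // v ∈ S}, x a.1 = y a := fun a => dif_pos a.2
  have hxSc : ∀ i ∈ Sᶜ, x i = 0 := fun i hi => dif_neg (Finset.mem_compl.1 hi)
  -- sums over S
  have hsub : ∀ f : Fin n → ℝ, ∑ i ∈ S, f i = ∑ a : {v : Fin n // v ∈ S}, f a.1 := by
    intro f
    rw [← Finset.sum_coe_sort S f]
  have hxsum : ∑ i, x i = 0 := by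
    rw [← Finset.sum_add_sum_compl S]
    rw [Finset.sum_eq_zero hxSc, add_zero, hsub]
    rw [Finset.sum_congr rfl fun a _ => hxS a]
    exact hysum
  have hxsq : ∑ i, (x i)^2 = ∑ a : {v : Fin n // v ∈ S}, (y a)^2 := by
    rw [← Finset.sum_add_sum_compl S]
    have hc0 : ∑ i ∈ Sᶜ, (x i)^2 = 0 :=
      Finset.sum_eq_zero fun i hi => by rw [hxSc i hi]; ring
    rw [hc0, add_zero, hsub]
    exact Finset.sum_congr rfl fun a _ => by rw [hxS a]
  -- quadratic form splitting
  have hsubdiag : ∀ a : {v : Fin n // v ∈ S}, subW W S a a = 0 := fun a => hdiag a.1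
  have key1 : ∑ i, (∑ j, W i j) * (x i)^2
      = ∑ a : {v : Fin n // v ∈ S}, (∑ b : {v : Fin n // v ∈ S}, subW W S a b) * (y a)^2
        + ∑ a : {v : Fin n // v ∈ S}, (∑ t ∈ Sᶜ, W a.1 t) * (y a)^2 := by
    rw [← Finset.sum_add_sum_compl S]
    have hc0 : ∑ i ∈ Sᶜ, (∑ j, W i j) * (x i)^2 = 0 :=
      Finset.sum_eq_zero fun i hi => by rw [hxSc i hi]; ring
    rw [hc0, add_zero, hsub, ← Finset.sum_add_distrib]
    refine Finset.sum_congr rfl fun a _ => ?_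
    rw [hxS a]
    have : ∑ j, W a.1 j = (∑ b : {v : Fin n // v ∈ S}, subW W S a b) + ∑ t ∈ Sᶜ, W a.1 t := by
      rw [← Finset.sum_add_sum_compl S (fun j => W a.1 j)]
      congr 1
      rw [hsub]
      rfl
    rw [this, add_mul]
  have key2 : ∑ i, ∑ j, W i j * (x i * x j)
      = ∑ a : {v : Fin n // v ∈ S}, ∑ b : {v : Fin n // v ∈ S}, subW W S a b * (y a * y b) := by
    rw [← Finset.sum_add_sum_compl S]
    have hc0 : ∑ i ∈ Sᶜ, ∑ j, W i j * (x i * x j) = 0 :=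
      Finset.sum_eq_zero fun i hi => Finset.sum_eq_zero fun j _ => by rw [hxSc i hi]; ring
    rw [hc0, add_zero, hsub]
    refine Finset.sum_congr rfl fun a _ => ?_
    rw [← Finset.sum_add_sum_compl S (fun j => W a.1 j * (x a.1 * x j))]
    have hc1 : ∑ j ∈ Sᶜ, W a.1 j * (x a.1 * x j) = 0 :=
      Finset.sum_eq_zero fun j hj => by rw [hxSc j hj]; ring
    rw [hc1, add_zero, hsub]
    refine Finset.sum_congr rfl fun b _ => ?_
    rw [hxS a, hxS b]
    rfl
  have hsplit : x ⬝ᵥ (lap W *ᵥ x)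
      = y ⬝ᵥ (lap (subW W S) *ᵥ y)
        + ∑ a : {v : Fin n // v ∈ S}, (∑ t ∈ Sᶜ, W a.1 t) * (y a)^2 := by
    rw [quad_expand W hdiag x, quad_expand (subW W S) hsubdiag y, key1, key2]
    ring
  -- lower bound on the big quadratic form
  have hlow : eigNth hL 1 * (∑ i, (x i)^2) ≤ x ⬝ᵥ (lap W *ᵥ x) :=
    quad_lower hL hcardn (lap_psd W hsym hnonneg hdiag)
      (lap_mulVec_one W hdiag) (lap_ker_const W hsym hnonneg hdiag hconn) x hxsum
  -- external cost bound
  have hextb : ∑ a : {v : Fin n // v ∈ S}, (∑ t ∈ Sᶜ, W a.1 t) * (y a)^2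
      ≤ (eigNth hL 1 - τ) * ∑ a : {v : Fin n // v ∈ S}, (y a)^2 := by
    rw [Finset.mul_sum]
    exact Finset.sum_le_sum fun a _ =>
      mul_le_mul_of_nonneg_right (hext a.1 a.2) (sq_nonneg _)
  rw [hxsq] at hlow
  have hyy : y ⬝ᵥ (lap (subW W S) *ᵥ y)
      ≥ τ * ∑ a : {v : Fin n // v ∈ S}, (y a)^2 := by
    have := hsplit
    nlinarith [hlow, hextb]
  simpa using hyy
end

section
/- Let G be a connected weighted graph with Laplacian L and Fiedler value λ_2, let Y be a Fiedler vector (eigenvector for λ_2), and let W = {v : Y(v) = 0} be nonempty. If H is a connected component of the graph G − W (obtained by deleting the vertices of W and incident edges), then λ_2 is an eigenvalue of the principal submatrix L_H of L indexed by the vertices of H, and moreover λ_2 is either the smallest or the second smallest eigenvalue of L_H. -/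
open Matrix

section Helpers

variable {ι : Type*} [Fintype ι] [DecidableEq ι] {B : Matrix ι ι ℝ} (hB : B.IsHermitian)

lemma aux_quadform (x : ι → ℝ) :
    x ⬝ᵥ (B *ᵥ x) = ∑ i, hB.eigenvalues i * ((star (hB.eigenvectorUnitary : Matrix ι ι ℝ) *ᵥ x) i)^2 := by
  set U := (hB.eigenvectorUnitary : Matrix ι ι ℝ) with hU
  set y := star U *ᵥ x with hy
  have hsU : Uᵀ = star U := by ext i j; simp [star_apply, hU]
  conv_lhs => rw [hB.spectral_theorem, Unitary.conjStarAlgAut_apply]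
  rw [← mulVec_mulVec, ← mulVec_mulVec, dotProduct_mulVec, ← mulVec_transpose, hsU, ← hy]
  simp only [dotProduct, mulVec_diagonal, RCLike.ofReal_real_eq_id, Function.comp, id]
  exact Finset.sum_congr rfl fun i _ => by ring

lemma aux_normform (x : ι → ℝ) :
    x ⬝ᵥ x = ∑ i, ((star (hB.eigenvectorUnitary : Matrix ι ι ℝ) *ᵥ x) i)^2 := by
  set U := (hB.eigenvectorUnitary : Matrix ι ι ℝ) with hU
  set y := star U *ᵥ x with hy
  have hsU : Uᵀ = star U := by ext i j; simp [star_apply, hU]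
  have hx : x = U *ᵥ y := by
    rw [hy, mulVec_mulVec, (Matrix.mem_unitaryGroup_iff).mp (hB.eigenvectorUnitary).2, one_mulVec]
  conv_lhs => rw [hx]
  rw [dotProduct_mulVec, ← mulVec_transpose, hsU, mulVec_mulVec,
    (Matrix.mem_unitaryGroup_iff').mp (hB.eigenvectorUnitary).2, one_mulVec]
  simp [dotProduct, sq]

lemma aux_coord_eq (x : ι → ℝ) (i : ι) :
    (star (hB.eigenvectorUnitary : Matrix ι ι ℝ) *ᵥ x) i = ⇑(hB.eigenvectorBasis i) ⬝ᵥ x := by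
  simp [mulVec, dotProduct, star_apply]

lemma aux_exists_eig {t : ℝ} {v : ι → ℝ} (hv : v ≠ 0) (heq : B *ᵥ v = t • v) :
    ∃ i, hB.eigenvalues i = t := by
  set U := (hB.eigenvectorUnitary : Matrix ι ι ℝ) with hU
  set y := star U *ᵥ v with hy
  have hyn : y ≠ 0 := by
    intro h
    apply hv
    have : U *ᵥ y = v := by
      rw [hy, mulVec_mulVec, (Matrix.mem_unitaryGroup_iff).mp (hB.eigenvectorUnitary).2, one_mulVec]
    rw [← this, h, mulVec_zero]
  have hDy : diagonal (RCLike.ofReal ∘ hB.eigenvalues) *ᵥ y = t • y := by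
    have h1 : star U *ᵥ (B *ᵥ v) = star U *ᵥ (t • v) := by rw [heq]
    have h2 : star U * B = diagonal (RCLike.ofReal ∘ hB.eigenvalues) * star U := by
      conv_lhs => rw [hB.spectral_theorem, Unitary.conjStarAlgAut_apply]
      rw [← mul_assoc, ← mul_assoc, (Matrix.mem_unitaryGroup_iff').mp (hB.eigenvectorUnitary).2,
        one_mul]
    rw [mulVec_mulVec, h2, ← mulVec_mulVec, mulVec_smul] at h1
    exact h1
  obtain ⟨i, hi⟩ := Function.ne_iff.mp hyn
  refine ⟨i, ?_⟩
  have := congrFun hDy i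
  simp only [mulVec_diagonal, Pi.smul_apply, smul_eq_mul, Function.comp,
    RCLike.ofReal_real_eq_id, id] at this
  exact mul_right_cancel₀ hi this

lemma aux_rayleigh_lower {t : ℝ} {k0 : ι} (hk : ∀ i, i ≠ k0 → t ≤ hB.eigenvalues i)
    (x : ι → ℝ) (hperp : ⇑(hB.eigenvectorBasis k0) ⬝ᵥ x = 0) :
    t * (x ⬝ᵥ x) ≤ x ⬝ᵥ (B *ᵥ x) := by
  rw [aux_quadform hB, aux_normform hB, Finset.mul_sum]
  apply Finset.sum_le_sum
  intro i _
  by_cases h : i = k0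
  · subst h
    rw [aux_coord_eq, hperp]
    simp
  · exact mul_le_mul_of_nonneg_right (hk i h) (sq_nonneg _)

lemma aux_eigList_sorted : (eigList hB).Pairwise (· ≤ ·) := Multiset.pairwise_sort _ _

lemma aux_coe_eigList : (eigList hB : Multiset ℝ) = Finset.univ.val.map hB.eigenvalues :=
  Multiset.sort_eq _ _

lemma aux_eigList_length : (eigList hB).length = Fintype.card ι := by
  have := congrArg Multiset.card (aux_coe_eigList hB)
  simpa using this

lemma aux_mem_eigList {r : ℝ} : r ∈ eigList hB ↔ ∃ i, hB.eigenvalues i = r := by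
  rw [← Multiset.mem_coe, aux_coe_eigList]
  simp

lemma aux_two_small {t : ℝ} (h2 : 2 ≤ (eigList hB).length)
    (h0 : (eigList hB).getD 0 0 < t) (h1 : (eigList hB).getD 1 0 < t) :
    ∃ i0 i1 : ι, i0 ≠ i1 ∧ hB.eigenvalues i0 < t ∧ hB.eigenvalues i1 < t := by
  obtain ⟨a, l1, hl1⟩ := List.exists_cons_of_ne_nil (l := eigList hB)
    (List.ne_nil_of_length_pos (by omega))
  obtain ⟨b, l2, hl2⟩ : ∃ b l2, l1 = b :: l2 := by
    apply List.exists_cons_of_ne_nil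
    apply List.ne_nil_of_length_pos
    have := congrArg List.length hl1
    simp at this; omega
  rw [hl1, hl2] at h0 h1
  simp only [List.getD_cons_zero, List.getD_cons_succ] at h0 h1
  have hcount : 2 ≤ Multiset.countP (fun r => r < t) (Finset.univ.val.map hB.eigenvalues) := by
    rw [← aux_coe_eigList hB, hl1, hl2]
    rw [Multiset.coe_countP]
    simp only [List.countP_cons]
    have : decide (a < t) = true := by simpa using h0
    have : decide (b < t) = true := by simpa using h1
    simp_all
  rw [Multiset.countP_map] at hcount
  have hcard : 2 ≤ (Finset.univ.filter (fun i => hB.eigenvalues i < t)).card := by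
    rw [Finset.card_def, Finset.filter_val]
    simpa [Multiset.countP_eq_card_filter] using hcount
  obtain ⟨i0, hi0, i1, hi1, hne⟩ := Finset.one_lt_card.mp
    (show 1 < (Finset.univ.filter fun i => hB.eigenvalues i < t).card by omega)
  exact ⟨i0, i1, hne, (Finset.mem_filter.mp hi0).2, (Finset.mem_filter.mp hi1).2⟩

lemma aux_tail_bound {k0 : ι} (hk0 : hB.eigenvalues k0 = (eigList hB).getD 0 0)
    (h2 : 2 ≤ (eigList hB).length) :
    ∀ i, i ≠ k0 → (eigList hB).getD 1 0 ≤ hB.eigenvalues i := by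
  intro i hi
  obtain ⟨a, l1, hl1⟩ := List.exists_cons_of_ne_nil (l := eigList hB)
    (List.ne_nil_of_length_pos (by omega))
  obtain ⟨b, l2, hl2⟩ : ∃ b l2, l1 = b :: l2 := by
    apply List.exists_cons_of_ne_nil
    apply List.ne_nil_of_length_pos
    have := congrArg List.length hl1
    simp at this; omega
  subst hl2
  have hM : (Finset.univ.val.map hB.eigenvalues) = ((a :: b :: l2 : List ℝ) : Multiset ℝ) := by
    rw [← aux_coe_eigList hB, hl1]
  have hsplit : Finset.univ.val = k0 ::ₘ Finset.univ.val.erase k0 :=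
    (Multiset.cons_erase (Finset.mem_univ k0)).symm
  have hmap : (a : ℝ) ::ₘ ((Finset.univ.val.erase k0).map hB.eigenvalues)
      = a ::ₘ ((b :: l2 : List ℝ) : Multiset ℝ) := by
    have h1 : hB.eigenvalues k0 = a := by rw [hk0, hl1]; rfl
    calc (a : ℝ) ::ₘ ((Finset.univ.val.erase k0).map hB.eigenvalues)
        = (Finset.univ.val.map hB.eigenvalues) := by
          conv_rhs => rw [hsplit]
          rw [Multiset.map_cons, h1]
      _ = _ := by rw [hM]; rfl
  have hmem : hB.eigenvalues i ∈ ((b :: l2 : List ℝ) : Multiset ℝ) := by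
    rw [← (Multiset.cons_inj_right a).mp hmap]
    exact Multiset.mem_map_of_mem _ ((Multiset.mem_erase_of_ne hi).mpr (Finset.mem_univ i))
  have hsorted : (eigList hB).Pairwise (· ≤ ·) := aux_eigList_sorted hB
  rw [hl1] at hsorted
  have hb : ∀ x ∈ (b :: l2 : List ℝ), b ≤ x := by
    intro x hx
    rcases List.mem_cons.mp hx with h | h
    · exact le_of_eq h.symm
    · exact List.rel_of_pairwise_cons (List.pairwise_cons.mp hsorted).2 (a' := x) h
  have : (eigList hB).getD 1 0 = b := by rw [hl1]; rfl
  rw [this]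
  exact hb _ (by exact_mod_cast hmem)

end Helpers

/-- let `G` be a connected weighted graph on `n ≥ 3` vertices with
Laplacian `lap A`, Fiedler value `λ₂ = eigNth hL 1` and Fiedler vector `Y`, and suppose
the zero set `{v | Y v = 0}` of `Y` is nonempty.  If `H` is a connected component of
`G − W` (so: `H` is nonempty, avoids the zero set, is connected as an induced subgraph,
and has no edges to vertices outside `H` on which `Y` is nonzero), then `λ₂` is an
eigenvalue of the principal submatrix `L_H` of the Laplacian, and it is the smallest or
the second smallest eigenvalue of `L_H`. -/
theorem fiedler_value_eigenvalue_of_component_submatrix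
    {n : ℕ} (hn : 3 ≤ n) (A : Matrix (Fin n) (Fin n) ℝ)
    (hsym : ∀ i j, A i j = A j i) (hnonneg : ∀ i j, 0 ≤ A i j)
    (hdiag : ∀ i, A i i = 0)
    (hconn : (SimpleGraph.fromRel fun i j => 0 < A i j).Connected)
    (hL : (lap A).IsHermitian)
    (Y : Fin n → ℝ) (hY : Y ≠ 0) (hEig : lap A *ᵥ Y = eigNth hL 1 • Y)
    (hW : ∃ v, Y v = 0)
    (H : Finset (Fin n)) (hHne : H.Nonempty)
    (hHZ : ∀ v ∈ H, Y v ≠ 0)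
    (hHclosed : ∀ v ∈ H, ∀ u ∉ H, Y u ≠ 0 → A v u = 0)
    (hHconn : ((SimpleGraph.fromRel fun i j => 0 < A i j).induce
      (↑H : Set (Fin n))).Connected)
    (hLH : ((lap A).submatrix (Subtype.val : {v : Fin n // v ∈ H} → Fin n)
      Subtype.val).IsHermitian) :
    (∃ v : {x : Fin n // x ∈ H} → ℝ, v ≠ 0 ∧
        ((lap A).submatrix Subtype.val Subtype.val) *ᵥ v = eigNth hL 1 • v) ∧
      (eigNth hLH 0 = eigNth hL 1 ∨ eigNth hLH 1 = eigNth hL 1) := by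
  set lam := eigNth hL 1 with hlam
  set B := (lap A).submatrix (Subtype.val : {v : Fin n // v ∈ H} → Fin n) Subtype.val with hB
  -- Part 1: restriction of Y is an eigenvector
  set v : {x : Fin n // x ∈ H} → ℝ := fun i => Y i.1 with hv
  obtain ⟨v0, hv0⟩ := hHne
  have hv_ne : v ≠ 0 := by
    intro h
    exact hHZ v0 hv0 (congrFun h ⟨v0, hv0⟩)
  have hveig : B *ᵥ v = lam • v := by
    funext i
    have hrow := congrFun hEig i.1
    simp only [mulVec, dotProduct, Pi.smul_apply, smul_eq_mul] at hrow ⊢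
    have h1 : ∑ j : Fin n, lap A i.1 j * Y j = ∑ j ∈ H, lap A i.1 j * Y j := by
      refine (Finset.sum_subset (Finset.subset_univ H) ?_).symm
      intro j _ hj
      have hne : i.1 ≠ j := fun h => hj (h ▸ i.2)
      by_cases hYj : Y j = 0
      · rw [hYj, mul_zero]
      · have : A i.1 j = 0 := hHclosed i.1 i.2 j hj hYj
        simp [lap, hne, this]
    have h2 : ∑ j ∈ H, lap A i.1 j * Y j = ∑ j : {x : Fin n // x ∈ H}, lap A i.1 j.1 * Y j.1 :=
      (Finset.sum_coe_sort H _).symm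
    calc ∑ j : {x : Fin n // x ∈ H}, B i j * v j
        = ∑ j : {x : Fin n // x ∈ H}, lap A i.1 j.1 * Y j.1 := rfl
      _ = lam * Y i.1 := by rw [← h2, ← h1, hrow]
  refine ⟨⟨v, hv_ne, hveig⟩, ?_⟩
  -- Part 2
  have hexist : ∃ i, hLH.eigenvalues i = lam := aux_exists_eig hLH hv_ne hveig
  have hmem : lam ∈ eigList hLH := (aux_mem_eigList hLH).mpr hexist
  by_cases hc0 : eigNth hLH 0 = lam
  · exact Or.inl hc0
  right
  -- destructure the sorted list of B
  obtain ⟨a, l1, hl1⟩ := List.exists_cons_of_ne_nil (l := eigList hLH)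
    (List.ne_nil_of_mem hmem)
  have ha : eigNth hLH 0 = a := by rw [eigNth, hl1]; rfl
  have hlam_l1 : lam ∈ l1 := by
    rcases List.mem_cons.mp (hl1 ▸ hmem) with h | h
    · exact absurd (ha.trans h.symm) hc0
    · exact h
  obtain ⟨b, l2, hl2⟩ := List.exists_cons_of_ne_nil (List.ne_nil_of_mem hlam_l1)
  subst hl2
  have hb : eigNth hLH 1 = b := by rw [eigNth, hl1]; rfl
  have hsortB : (eigList hLH).Pairwise (· ≤ ·) := aux_eigList_sorted hLH
  rw [hl1] at hsortB
  have hab : a ≤ b := (List.pairwise_cons.mp hsortB).1 b (by simp)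
  have hb_le : b ≤ lam := by
    rcases List.mem_cons.mp hlam_l1 with h | h
    · exact le_of_eq h.symm
    · exact List.rel_of_pairwise_cons (List.pairwise_cons.mp hsortB).2 (a' := lam) h
  rw [hb]
  by_contra hne
  have hblt : b < lam := lt_of_le_of_ne hb_le hne
  have halt : a < lam := lt_of_le_of_lt hab hblt
  have hlenB : 2 ≤ (eigList hLH).length := by rw [hl1]; simp
  -- two small eigenvalues of B
  obtain ⟨i0, i1, hi01, hbeta0, hbeta1⟩ := aux_two_small hLH hlenB
    (by rw [← ha] at halt; exact halt) (by rw [← hb] at hblt; exact hblt)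
  -- index k0 for the smallest eigenvalue of L
  have hlenL : (eigList hL).length = n := by rw [aux_eigList_length]; simp
  obtain ⟨c, r1, hr1⟩ := List.exists_cons_of_ne_nil (l := eigList hL)
    (List.ne_nil_of_length_pos (by omega))
  have hcmem : c ∈ eigList hL := by rw [hr1]; simp
  obtain ⟨k0, hk0⟩ := (aux_mem_eigList hL).mp hcmem
  have hk0' : hL.eigenvalues k0 = (eigList hL).getD 0 0 := by rw [hk0, hr1]; rfl
  have hkbound : ∀ i, i ≠ k0 → lam ≤ hL.eigenvalues i :=
    aux_tail_bound hL hk0' (by omega)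
  set w0 : Fin n → ℝ := ⇑(hL.eigenvectorBasis k0) with hw0
  -- extension operator
  set ext : ({x : Fin n // x ∈ H} → ℝ) → (Fin n → ℝ) :=
    fun u j => if h : j ∈ H then u ⟨j, h⟩ else 0 with hext
  have hT1 : ∀ u : {x : Fin n // x ∈ H} → ℝ, ext u ⬝ᵥ ext u = u ⬝ᵥ u := by
    intro u
    simp only [dotProduct]
    calc ∑ j : Fin n, ext u j * ext u j
        = ∑ j ∈ H, ext u j * ext u j := by
          refine (Finset.sum_subset (Finset.subset_univ H) ?_).symm
          intro j _ hj
          simp [hext, hj]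
      _ = ∑ j : {x : Fin n // x ∈ H}, ext u j.1 * ext u j.1 :=
          (Finset.sum_coe_sort H (fun j => ext u j * ext u j)).symm
      _ = ∑ j : {x : Fin n // x ∈ H}, u j * u j := by
          refine Finset.sum_congr rfl fun j _ => ?_
          simp [hext, j.2]
  have hT2 : ∀ u : {x : Fin n // x ∈ H} → ℝ,
      ext u ⬝ᵥ (lap A *ᵥ ext u) = u ⬝ᵥ (B *ᵥ u) := by
    intro u
    simp only [dotProduct, mulVec]
    have hinner : ∀ j : {x : Fin n // x ∈ H},
        ∑ k : Fin n, lap A j.1 k * ext u k = ∑ k : {x : Fin n // x ∈ H}, B j k * u k := by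
      intro j
      calc ∑ k : Fin n, lap A j.1 k * ext u k
          = ∑ k ∈ H, lap A j.1 k * ext u k := by
            refine (Finset.sum_subset (Finset.subset_univ H) ?_).symm
            intro k _ hk
            simp [hext, hk]
        _ = ∑ k : {x : Fin n // x ∈ H}, lap A j.1 k.1 * ext u k.1 :=
            (Finset.sum_coe_sort H (fun k => lap A j.1 k * ext u k)).symm
        _ = ∑ k : {x : Fin n // x ∈ H}, B j k * u k := by
            refine Finset.sum_congr rfl fun k _ => ?_
            simp [hext, k.2, hB]
    calc ∑ j : Fin n, ext u j * ∑ k : Fin n, lap A j k * ext u k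
        = ∑ j ∈ H, ext u j * ∑ k : Fin n, lap A j k * ext u k := by
          refine (Finset.sum_subset (Finset.subset_univ H) ?_).symm
          intro j _ hj
          simp [hext, hj]
      _ = ∑ j : {x : Fin n // x ∈ H}, ext u j.1 * ∑ k : Fin n, lap A j.1 k * ext u k :=
          (Finset.sum_coe_sort H (fun j => ext u j * ∑ k : Fin n, lap A j k * ext u k)).symm
      _ = ∑ j : {x : Fin n // x ∈ H}, u j * ∑ k : {x : Fin n // x ∈ H}, B j k * u k := by
          refine Finset.sum_congr rfl fun j _ => ?_
          rw [hinner j]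
          congr 1
          simp [hext, j.2]
  have hT3 : ∀ u : {x : Fin n // x ∈ H} → ℝ,
      w0 ⬝ᵥ ext u = (fun i : {x : Fin n // x ∈ H} => w0 i.1) ⬝ᵥ u := by
    intro u
    simp only [dotProduct]
    calc ∑ j : Fin n, w0 j * ext u j
        = ∑ j ∈ H, w0 j * ext u j := by
          refine (Finset.sum_subset (Finset.subset_univ H) ?_).symm
          intro j _ hj
          simp [hext, hj]
      _ = ∑ j : {x : Fin n // x ∈ H}, w0 j.1 * ext u j.1 :=
          (Finset.sum_coe_sort H (fun j => w0 j * ext u j)).symm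
      _ = ∑ j : {x : Fin n // x ∈ H}, w0 j.1 * u j := by
          refine Finset.sum_congr rfl fun j _ => ?_
          simp [hext, j.2]
  -- build the test vector
  set UB := (hLH.eigenvectorUnitary : Matrix {x : Fin n // x ∈ H} {x : Fin n // x ∈ H} ℝ) with hUB
  set c' : {x : Fin n // x ∈ H} → ℝ := (fun i : {x : Fin n // x ∈ H} => w0 i.1) ᵥ* UB with hc'
  obtain ⟨p, q, hpq0, hperp0⟩ : ∃ p q : ℝ, ¬(p = 0 ∧ q = 0) ∧ c' i0 * p + c' i1 * q = 0 := by
    by_cases hcc : c' i0 = 0 ∧ c' i1 = 0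
    · exact ⟨1, 0, by simp, by rw [hcc.1, hcc.2]; ring⟩
    · exact ⟨c' i1, -c' i0, by rintro ⟨h1, h2⟩; exact hcc ⟨by linarith [neg_eq_zero.mp h2], h1⟩,
        by ring⟩
  set z : {x : Fin n // x ∈ H} → ℝ := fun i => if i = i0 then p else if i = i1 then q else 0
    with hz
  set x := UB *ᵥ z with hx
  have hstarx : star UB *ᵥ x = z := by
    rw [hx, mulVec_mulVec, (Matrix.mem_unitaryGroup_iff').mp (hLH.eigenvectorUnitary).2,
      one_mulVec]
  have hsum_pair : ∀ g : {x : Fin n // x ∈ H} → ℝ,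
      ∑ i, g i * z i ^ 2 = g i0 * p ^ 2 + g i1 * q ^ 2 := by
    intro g
    rw [← Finset.sum_subset (Finset.subset_univ {i0, i1})]
    · rw [Finset.sum_pair hi01]
      simp [hz, hi01, Ne.symm hi01]
    · intro j _ hj
      simp only [Finset.mem_insert, Finset.mem_singleton, not_or] at hj
      simp [hz, hj.1, hj.2]
  have hxBx : x ⬝ᵥ (B *ᵥ x) = hLH.eigenvalues i0 * p ^ 2 + hLH.eigenvalues i1 * q ^ 2 := by
    rw [aux_quadform hLH]
    rw [← hUB, hstarx]
    exact hsum_pair _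
  have hxx : x ⬝ᵥ x = p ^ 2 + q ^ 2 := by
    rw [aux_normform hLH, ← hUB, hstarx]
    have := hsum_pair (fun _ => 1)
    simpa using this
  have hxx_pos : 0 < p ^ 2 + q ^ 2 := by
    rcases not_and_or.mp hpq0 with h | h
    · have := sq_nonneg q; have := pow_pos (abs_pos.mpr h) 2
      nlinarith [sq_nonneg p, sq_nonneg q, sq_abs p]
    · nlinarith [sq_nonneg p, sq_nonneg q, sq_abs q, pow_pos (abs_pos.mpr h) 2]
  have hperp : w0 ⬝ᵥ ext x = 0 := by
    rw [hT3]
    have : (fun i : {x : Fin n // x ∈ H} => w0 i.1) ⬝ᵥ x = c' ⬝ᵥ z := by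
      rw [hx, dotProduct_mulVec, ← hc']
    rw [this]
    have : c' ⬝ᵥ z = c' i0 * p + c' i1 * q := by
      simp only [dotProduct]
      have := hsum_pair c'
      rw [← Finset.sum_subset (Finset.subset_univ {i0, i1})]
      · rw [Finset.sum_pair hi01]
        simp [hz, hi01, Ne.symm hi01]
      · intro j _ hj
        simp only [Finset.mem_insert, Finset.mem_singleton, not_or] at hj
        simp [hz, hj.1, hj.2]
    rw [this, hperp0]
  have hlower : lam * (ext x ⬝ᵥ ext x) ≤ ext x ⬝ᵥ (lap A *ᵥ ext x) :=
    aux_rayleigh_lower hL hkbound (ext x) hperp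
  rw [hT1, hT2, hxx, hxBx] at hlower
  have hp0 : hLH.eigenvalues i0 * p ^ 2 ≤ lam * p ^ 2 :=
    mul_le_mul_of_nonneg_right hbeta0.le (sq_nonneg p)
  have hq0 : hLH.eigenvalues i1 * q ^ 2 ≤ lam * q ^ 2 :=
    mul_le_mul_of_nonneg_right hbeta1.le (sq_nonneg q)
  rcases not_and_or.mp hpq0 with h | h
  · have hp2 : 0 < p ^ 2 := by positivity
    have := mul_lt_mul_of_pos_right hbeta0 hp2
    nlinarith
  · have hq2 : 0 < q ^ 2 := by positivity
    have := mul_lt_mul_of_pos_right hbeta1 hq2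
    nlinarith
end
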